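/- arXiv:1506.00226 — 2 statements merged into one kernel-verified Lean document; each statement's English description precedes it below -/
import Mathlib

section
/- Let a, b > 0 and v ∈ (0, 1) with 0 < v ≤ 1/2. Then ((1 − v)a + v·b)² ≤ (1 − v)²(a − b)² − r₁(√(ab) − b)² + K(√h, 2)^{−r̂₁} · (a^{1−v} b^{v})², where h = b/a, r = min{v, 1 − v}, r₁ = min{2r, 1 − 2r} and r̂₁ = min{2r₁, 1 − 2r₁}. -/
/-!
Put `t = √(b/a)`, so that `b = a t²` and `√(ab) = a t`, and let `l = 1 - 2v`, so that
`r₁ = min {l, 1 - l}`. The Zuo–Shi–Fujii refinement of weighted AM–GM, applied with weight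
`2l` or `2l - 1`, gives
`K(t)^{r̂₁} t^{2l} ≤ A := l t² + (1 - l) - r₁ (t - 1)²`, hence
`K(t)^{-r̂₁} (a^{1-v} b^v)² = a² t² / (K(t)^{r̂₁} t^{2l}) ≥ ab / A`.
On the other hand the left-hand side minus the first two terms on the right is exactly
`ab (2 - A)`, and `2 - A ≤ 1 / A` because `(A - 1)² ≥ 0`.
-/

/-- The Kantorovich constant `K(t, 2) = (t + 1)^2 / (4 t)`. -/
noncomputable def Kant (t : ℝ) : ℝ := (t + 1) ^ 2 / (4 * t)

lemma Kant_pos {t : ℝ} (ht : 0 < t) : 0 < Kant t := by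
  unfold Kant; positivity

lemma Kant_mul_self_rpow {s : ℝ} (hs : 0 < s) (m : ℝ) :
    (Kant s * s) ^ m = ((s + 1) / 2) ^ (2 * m) := by
  have hsq : Kant s * s = ((s + 1) / 2) ^ 2 := by
    rw [Kant]; field_simp; ring
  rw [hsq, ← Real.rpow_natCast_mul (by positivity)]
  norm_num

-- Zuo–Shi–Fujii refinement of the weighted AM–GM inequality.
lemma Kant_rpow_min_mul_rpow_le {s μ : ℝ} (hs : 0 < s) (hμ0 : 0 ≤ μ) (hμ1 : μ ≤ 1) :
    Kant s ^ min μ (1 - μ) * s ^ μ ≤ μ * s + (1 - μ) := by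
  have hK := (Kant_pos hs).le
  rcases le_total μ (1 / 2) with hμ | hμ
  · -- `(K s)^μ = ((s+1)/2)^{2μ} · 1^{1-2μ}`
    rw [min_eq_left (by linarith), ← Real.mul_rpow hK hs.le, Kant_mul_self_rpow hs]
    have := Real.geom_mean_le_arith_mean2_weighted (p₁ := (s + 1) / 2) (p₂ := 1)
      (by linarith : 0 ≤ 2 * μ) (by linarith : 0 ≤ 1 - 2 * μ) (by positivity) zero_le_one
      (by ring)
    rw [Real.one_rpow, mul_one] at this
    linarith
  · -- `K^{1-μ} s^μ = ((s+1)/2)^{2-2μ} · s^{2μ-1}`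
    have hsplit : s ^ μ = s ^ (1 - μ) * s ^ (2 * μ - 1) := by
      rw [← Real.rpow_add hs]; ring_nf
    rw [min_eq_right (by linarith), hsplit, ← mul_assoc, ← Real.mul_rpow hK hs.le,
      Kant_mul_self_rpow hs]
    have := Real.geom_mean_le_arith_mean2_weighted (p₁ := (s + 1) / 2) (p₂ := s)
      (by linarith : 0 ≤ 2 * (1 - μ)) (by linarith : 0 ≤ 2 * μ - 1) (by positivity) hs.le
      (by ring)
    linarith

lemma Kant_rpow_mul_rpow_two_mul_le {t l : ℝ} (ht : 0 < t) (hl0 : 0 ≤ l) (hl1 : l ≤ 1) :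
    Kant t ^ min (2 * min l (1 - l)) (1 - 2 * min l (1 - l)) * t ^ (2 * l)
      ≤ l * t ^ 2 + (1 - l) - min l (1 - l) * (t - 1) ^ 2 := by
  rcases le_total l (1 / 2) with hl | hl
  · rw [min_eq_left (by linarith : l ≤ 1 - l)]
    have := Kant_rpow_min_mul_rpow_le (μ := 2 * l) ht (by linarith) (by linarith)
    linarith
  · -- apply the Zuo–Shi–Fujii bound with `μ = 2l - 1` and multiply by `t`
    have hmin : min (2 * (1 - l)) (1 - 2 * (1 - l)) = min (2 * l - 1) (1 - (2 * l - 1)) := by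
      rw [min_comm]; ring_nf
    have hsplit : t ^ (2 * l) = t ^ (2 * l - 1) * t := by
      rw [← Real.rpow_add_one ht.ne']; ring_nf
    rw [min_eq_right (by linarith : 1 - l ≤ l), hmin, hsplit, ← mul_assoc]
    have := mul_le_mul_of_nonneg_right
      (Kant_rpow_min_mul_rpow_le (μ := 2 * l - 1) ht (by linarith) (by linarith)) ht.le
    linarith

lemma div_le_Kant_rpow_neg_mul {a t v ρ A : ℝ} (ha : 0 < a) (ht : 0 < t)
    (hA : Kant t ^ ρ * t ^ (2 * (1 - 2 * v)) ≤ A) :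
    a ^ 2 * t ^ 2 / A ≤ Kant t ^ (-ρ) * (a ^ (1 - v) * (a * t ^ 2) ^ v) ^ 2 := by
  have hD : 0 < Kant t ^ ρ * t ^ (2 * (1 - 2 * v)) := by
    have := Kant_pos ht; positivity
  have hgeom : (a ^ (1 - v) * (a * t ^ 2) ^ v) ^ 2 = a ^ 2 * t ^ (4 * v) := by
    rw [Real.mul_rpow ha.le (by positivity), ← mul_assoc, ← Real.rpow_add ha, sub_add_cancel,
      Real.rpow_one, ← Real.rpow_natCast_mul ht.le, mul_pow, ← Real.rpow_mul_natCast ht.le]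
    ring_nf
  have hprod : Kant t ^ (-ρ) * (a ^ (1 - v) * (a * t ^ 2) ^ v) ^ 2
      = a ^ 2 * t ^ 2 / (Kant t ^ ρ * t ^ (2 * (1 - 2 * v))) := by
    have ht2 : t ^ 2 = t ^ (4 * v) * t ^ (2 * (1 - 2 * v)) := by
      rw [← Real.rpow_add ht, ← Real.rpow_natCast]; ring_nf
    rw [hgeom, Real.rpow_neg (Kant_pos ht).le, ht2]
    field_simp
  rw [hprod]
  exact div_le_div_of_nonneg_left (by positivity) hD hA

lemma two_sub_le_one_div {A : ℝ} (hA : 0 < A) : 2 - A ≤ 1 / A := by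
  rw [le_div_iff₀ hA]; nlinarith [sq_nonneg (A - 1)]

theorem stmt_8 (a b v : ℝ) (ha : 0 < a) (hb : 0 < b) (hv0 : 0 < v) (hv : v ≤ 1 / 2)
    (h r r1 rh1 : ℝ) (hh : h = b / a) (hr : r = min v (1 - v))
    (hr1 : r1 = min (2 * r) (1 - 2 * r)) (hrh1 : rh1 = min (2 * r1) (1 - 2 * r1)) :
    ((1 - v) * a + v * b) ^ 2 ≤
      (1 - v) ^ 2 * (a - b) ^ 2 - r1 * (Real.sqrt (a * b) - b) ^ 2
        + Kant (Real.sqrt h) ^ (-rh1) * (a ^ (1 - v) * b ^ v) ^ 2 := by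
  set t := Real.sqrt h
  have ht : 0 < t := Real.sqrt_pos.mpr (by rw [hh]; positivity)
  have hb_eq : b = a * t ^ 2 := by
    rw [Real.sq_sqrt (by rw [hh]; positivity), hh]; field_simp
  have hsqrt : Real.sqrt (a * b) = a * t := by
    rw [hb_eq, show a * (a * t ^ 2) = (a * t) ^ 2 by ring, Real.sqrt_sq (by positivity)]
  have hr1_eq : r1 = min (1 - 2 * v) (1 - (1 - 2 * v)) := by
    rw [hr1, hr, min_eq_left (by linarith : v ≤ 1 - v), min_comm]; ring_nf
  have hA := Kant_rpow_mul_rpow_two_mul_le ht (l := 1 - 2 * v) (by linarith) (by linarith)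
  rw [← hr1_eq, ← hrh1] at hA
  set A := (1 - 2 * v) * t ^ 2 + (1 - (1 - 2 * v)) - r1 * (t - 1) ^ 2
  have hApos : 0 < A := lt_of_lt_of_le (by have := Kant_pos ht; positivity) hA
  have hlhs : ((1 - v) * a + v * b) ^ 2 - ((1 - v) ^ 2 * (a - b) ^ 2 - r1 * (a * t - b) ^ 2)
      = a ^ 2 * t ^ 2 * (2 - A) := by
    rw [hb_eq]; ring
  have hK : a ^ 2 * t ^ 2 / A ≤ Kant t ^ (-rh1) * (a ^ (1 - v) * b ^ v) ^ 2 := by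
    rw [hb_eq]; exact div_le_Kant_rpow_neg_mul ha ht hA
  have hgap : a ^ 2 * t ^ 2 * (2 - A) ≤ a ^ 2 * t ^ 2 / A := by
    simpa only [mul_one_div] using
      mul_le_mul_of_nonneg_left (two_sub_le_one_div hApos) (by positivity : 0 ≤ a ^ 2 * t ^ 2)
  rw [hsqrt]
  linarith
end

section
/- Let A, B be n×n positive definite complex matrices, let v ∈ (0,1), and let m, m', M, M' be positive reals satisfying either m'·I ≤ A ≤ m·I < M·I ≤ B ≤ M'·I or m'·I ≤ B ≤ m·I < M·I ≤ A ≤ M'·I in the Loewner order. Then A∇B ≥ 2r(A∇B − A#B) + r₁(A∇B + A#B − 2H_{1/4}(A, B)) + K(h^{1/4}, 2)^{r̂₁} · H_v(A, B) in the Loewner order, where h = M/m, r = min{v, 1 − v}, r₁ = min{2r, 1 − 2r} and r̂₁ = min{2r₁, 1 − 2r₁}. -/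
open Matrix
open scoped ComplexOrder

/-- Real power of a matrix, defined for Hermitian matrices via the spectral
decomposition (functional calculus); junk value otherwise. -/
noncomputable def mrpow {n : ℕ} (A : Matrix (Fin n) (Fin n) ℂ) (t : ℝ) :
    Matrix (Fin n) (Fin n) ℂ :=
  if h : A.IsHermitian then
    (h.eigenvectorUnitary : Matrix (Fin n) (Fin n) ℂ)
      * Matrix.diagonal (fun i => ((h.eigenvalues i ^ t : ℝ) : ℂ))
      * star (h.eigenvectorUnitary : Matrix (Fin n) (Fin n) ℂ)
  else A

/-- Weighted arithmetic mean `A ∇_v B = (1 - v) A + v B`. -/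
noncomputable def anabla {n : ℕ} (v : ℝ) (A B : Matrix (Fin n) (Fin n) ℂ) :
    Matrix (Fin n) (Fin n) ℂ :=
  ((1 - v : ℝ) : ℂ) • A + ((v : ℝ) : ℂ) • B

/-- Weighted geometric mean `A #_v B = A^{1/2} (A^{-1/2} B A^{-1/2})^v A^{1/2}`. -/
noncomputable def asharp {n : ℕ} (v : ℝ) (A B : Matrix (Fin n) (Fin n) ℂ) :
    Matrix (Fin n) (Fin n) ℂ :=
  mrpow A (1 / 2) * mrpow (mrpow A (-(1 / 2)) * B * mrpow A (-(1 / 2))) v * mrpow A (1 / 2)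

/-- Heinz operator mean `H_v(A, B) = (A #_v B + A #_{1-v} B) / 2`. -/
noncomputable def heinz {n : ℕ} (v : ℝ) (A B : Matrix (Fin n) (Fin n) ℂ) :
    Matrix (Fin n) (Fin n) ℂ :=
  ((1 / 2 : ℝ) : ℂ) • (asharp v A B + asharp (1 - v) A B)

/-- The Loewner order: `loewner X Y` iff `Y - X` is positive semidefinite. -/
def loewner {n : ℕ} (X Y : Matrix (Fin n) (Fin n) ℂ) : Prop := (Y - X).PosSemidef

/-!
Put `T = A^{-1/2} B A^{-1/2}`. Every mean in the statement is an operator perspective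
`A^{1/2} f(T) A^{1/2}` of a scalar function `f` (`x ^ v` for `A #_v B`, `1 - v + v x` for
`A ∇_v B`), and `f ↦ A^{1/2} f(T) A^{1/2}` is linear and monotone for the pointwise order on the
spectrum of `T`. So the Loewner inequality reduces to a scalar inequality at each `x ∈ σ(T)`, and
the hypotheses on `A` and `B` put `σ(T)` inside `[h, ∞)` or inside `(0, 1/h]`.

For such `x`, `K(h^{1/4}) ≤ K(x^{1/4})` because `K(t) = K(1/t)` and `K` increases on `[1, ∞)`.
The scalar inequality is then the sum of two instances of the refined Young inequality
`K(b/a)^{min(β, 1-β)} a^{1-β} b^β ≤ (1-β) a + β b`, with `β = 2 r₁`.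
-/

open scoped MatrixOrder

lemma Kant_inv (t : ℝ) : Kant t⁻¹ = Kant t := by
  rcases eq_or_ne t 0 with rfl | ht
  · simp
  · unfold Kant
    field_simp
    ring

lemma Kant_nonneg {t : ℝ} (ht : 0 ≤ t) : 0 ≤ Kant t := by
  unfold Kant
  positivity

lemma Kant_le_Kant {s t : ℝ} (hs : 1 ≤ s) (hst : s ≤ t) : Kant s ≤ Kant t := by
  have hs0 : 0 < s := by linarith
  have ht0 : 0 < t := by linarith
  rw [Kant, Kant, div_le_div_iff₀ (by positivity) (by positivity)]
  have hst1 : 1 ≤ s * t := one_le_mul_of_one_le_of_one_le hs (hs.trans hst)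
  nlinarith [mul_nonneg (sub_nonneg.2 hst) (sub_nonneg.2 hst1)]

lemma Kant_le_Kant_of_le_or_le_inv {s t : ℝ} (hs : 1 ≤ s) (ht : 0 < t)
    (hst : s ≤ t ∨ t ≤ s⁻¹) : Kant s ≤ Kant t := by
  rcases hst with hst | hst
  · exact Kant_le_Kant hs hst
  · rw [← Kant_inv t]
    exact Kant_le_Kant hs (le_inv_of_le_inv₀ ht hst)

lemma Kant_div_mul_mul {a b : ℝ} (ha : a ≠ 0) (hb : b ≠ 0) :
    Kant (b / a) * (a * b) = ((a + b) / 2) ^ 2 := by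
  unfold Kant
  field_simp
  ring

lemma Kant_young_of_le_half {a b β : ℝ} (ha : 0 < a) (hb : 0 < b) (hβ0 : 0 ≤ β)
    (hβ : β ≤ 1 / 2) :
    Kant (b / a) ^ β * (a ^ (1 - β) * b ^ β) ≤ (1 - β) * a + β * b := by
  have hab : 0 ≤ (a + b) / 2 := by positivity
  have hK : 0 ≤ Kant (b / a) := Kant_nonneg (by positivity)
  have key : Kant (b / a) ^ β * (a ^ (1 - β) * b ^ β)
      = ((a + b) / 2) ^ (2 * β) * a ^ (1 - 2 * β) := by
    rw [Real.rpow_mul hab, Real.rpow_two, ← Kant_div_mul_mul ha.ne' hb.ne',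
      Real.mul_rpow hK (by positivity), Real.mul_rpow ha.le hb.le,
      show 1 - β = β + (1 - 2 * β) by ring, Real.rpow_add ha]
    ring
  rw [key]
  linarith [Real.geom_mean_le_arith_mean2_weighted (by linarith : 0 ≤ 2 * β)
    (by linarith : 0 ≤ 1 - 2 * β) hab ha.le (by ring)]

lemma Kant_young {a b β : ℝ} (ha : 0 < a) (hb : 0 < b) (hβ0 : 0 ≤ β) (hβ1 : β ≤ 1) :
    Kant (b / a) ^ min β (1 - β) * (a ^ (1 - β) * b ^ β) ≤ (1 - β) * a + β * b := by
  rcases le_total β (1 / 2) with hβ | hβ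
  · rw [min_eq_left (by linarith)]
    exact Kant_young_of_le_half ha hb hβ0 hβ
  · have := Kant_young_of_le_half hb ha (by linarith : 0 ≤ 1 - β) (by linarith)
    rw [← inv_div, Kant_inv, sub_sub_cancel] at this
    rw [min_eq_right (by linarith)]
    linarith [mul_comm (a ^ (1 - β)) (b ^ β)]

lemma Kant_young_rpow {x β p q d e : ℝ} (hx : 0 < x) (hβ0 : 0 ≤ β) (hβ1 : β ≤ 1)
    (hd : |q - p| = d) (he : (1 - β) * p + β * q = e) :
    Kant (x ^ d) ^ min β (1 - β) * x ^ e ≤ (1 - β) * x ^ p + β * x ^ q := by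
  have := Kant_young (Real.rpow_pos_of_pos hx p) (Real.rpow_pos_of_pos hx q) hβ0 hβ1
  rw [← Real.rpow_sub hx, ← Real.rpow_mul hx.le, ← Real.rpow_mul hx.le, ← Real.rpow_add hx,
    mul_comm p, mul_comm q, he] at this
  rcases abs_choice (q - p) with h | h <;> rw [h] at hd <;> subst hd
  · exact this
  · rwa [Real.rpow_neg hx.le, Kant_inv]

lemma Kant_rpow_le_Kant_rpow {h x p : ℝ} (hh : 1 ≤ h) (hx : 0 < x) (hp : 0 ≤ p)
    (hsep : h ≤ x ∨ x ≤ h⁻¹) : Kant (h ^ p) ≤ Kant (x ^ p) := by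
  refine Kant_le_Kant_of_le_or_le_inv (Real.one_le_rpow hh hp) (Real.rpow_pos_of_pos hx p) ?_
  rw [← Real.inv_rpow (by linarith)]
  exact hsep.imp (Real.rpow_le_rpow (by linarith) · hp) (Real.rpow_le_rpow hx.le · hp)

lemma rpow_add_rpow_one_sub_min (x v : ℝ) :
    x ^ v + x ^ (1 - v) = x ^ min v (1 - v) + x ^ (1 - min v (1 - v)) := by
  rcases min_choice v (1 - v) with h | h <;> rw [h]
  rw [sub_sub_cancel, add_comm]

lemma Kant_rpow_mul_heinz_le {x r r1 rh1 : ℝ} (hx : 0 < x) (hr0 : 0 ≤ r) (hr2 : r ≤ 1 / 2)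
    (hr1 : r1 = min (2 * r) (1 - 2 * r)) (hrh1 : rh1 = min (2 * r1) (1 - 2 * r1)) :
    Kant (x ^ (1 / 4 : ℝ)) ^ rh1 * (x ^ r + x ^ (1 - r))
      ≤ (1 - 2 * r - r1) * (1 + x) + 2 * (2 * r - r1) * x ^ (1 / 2 : ℝ)
        + 2 * r1 * (x ^ (1 / 4 : ℝ) + x ^ (3 / 4 : ℝ)) := by
  -- With `β = 2 r1`, both `x ^ r` and `x ^ (1 - r)` are `β`-weighted geometric means of two
  -- powers of `x` whose exponents differ by `1 / 4`.
  rcases le_total r (1 / 4) with hr4 | hr4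
  · have hβ : min (4 * r) (1 - 4 * r) = rh1 := by
      rw [hrh1, hr1, min_eq_left (show 2 * r ≤ 1 - 2 * r by linarith)]; ring_nf
    have i1 := Kant_young_rpow hx (β := 4 * r) (p := 0) (q := 1 / 4) (d := 1 / 4) (e := r)
      (by linarith) (by linarith) (by norm_num) (by ring)
    have i2 := Kant_young_rpow hx (β := 4 * r) (p := 1) (q := 3 / 4) (d := 1 / 4) (e := 1 - r)
      (by linarith) (by linarith) (by norm_num) (by ring)
    rw [hβ, Real.rpow_zero] at i1
    rw [hβ, Real.rpow_one] at i2
    rw [hr1, min_eq_left (show 2 * r ≤ 1 - 2 * r by linarith)]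
    linarith
  · have hβ : min (2 - 4 * r) (1 - (2 - 4 * r)) = rh1 := by
      rw [hrh1, hr1, min_eq_right (show 1 - 2 * r ≤ 2 * r by linarith)]; ring_nf
    have i1 := Kant_young_rpow hx (β := 2 - 4 * r) (p := 1 / 2) (q := 1 / 4) (d := 1 / 4)
      (e := r) (by linarith) (by linarith) (by norm_num) (by ring)
    have i2 := Kant_young_rpow hx (β := 2 - 4 * r) (p := 1 / 2) (q := 3 / 4) (d := 1 / 4)
      (e := 1 - r) (by linarith) (by linarith) (by norm_num) (by ring)
    rw [hβ] at i1 i2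
    rw [hr1, min_eq_right (show 1 - 2 * r ≤ 2 * r by linarith)]
    linarith

theorem heinz_Kant_scalar {h x v r r1 rh1 : ℝ} (hh : 1 ≤ h) (hx : 0 < x)
    (hsep : h ≤ x ∨ x ≤ h⁻¹) (hv0 : 0 < v) (hv1 : v < 1) (hr : r = min v (1 - v))
    (hr1 : r1 = min (2 * r) (1 - 2 * r)) (hrh1 : rh1 = min (2 * r1) (1 - 2 * r1)) :
    2 * r * ((1 + x) / 2 - x ^ (1 / 2 : ℝ))
      + r1 * ((1 + x) / 2 + x ^ (1 / 2 : ℝ) - (x ^ (1 / 4 : ℝ) + x ^ (3 / 4 : ℝ)))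
      + Kant (h ^ (1 / 4 : ℝ)) ^ rh1 * ((x ^ v + x ^ (1 - v)) / 2) ≤ (1 + x) / 2 := by
  have hr0 : 0 ≤ r := hr ▸ le_min hv0.le (by linarith)
  have hr2 : r ≤ 1 / 2 := by
    linarith [hr ▸ min_le_left v (1 - v), hr ▸ min_le_right v (1 - v)]
  have hr1_nonneg : 0 ≤ r1 := hr1 ▸ le_min (by linarith) (by linarith)
  have hr1_le : r1 ≤ 1 / 2 := by
    linarith [hr1 ▸ min_le_left (2 * r) (1 - 2 * r), hr1 ▸ min_le_right (2 * r) (1 - 2 * r)]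
  have hrh1_nonneg : 0 ≤ rh1 := hrh1 ▸ le_min (by linarith) (by linarith)
  have hK : Kant (h ^ (1 / 4 : ℝ)) ^ rh1 * (x ^ r + x ^ (1 - r))
      ≤ Kant (x ^ (1 / 4 : ℝ)) ^ rh1 * (x ^ r + x ^ (1 - r)) := by
    gcongr
    · exact Kant_nonneg (by positivity)
    · exact Kant_rpow_le_Kant_rpow hh hx (by norm_num) hsep
  rw [rpow_add_rpow_one_sub_min, ← hr]
  linarith [Kant_rpow_mul_heinz_le hx hr0 hr2 hr1 hrh1]

section

variable {n : ℕ} {A B C : Matrix (Fin n) (Fin n) ℂ}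

lemma Matrix.continuousOn_spectrum (A : Matrix (Fin n) (Fin n) ℂ) (f : ℝ → ℝ) :
    ContinuousOn f (spectrum ℝ A) :=
  A.finite_real_spectrum.continuousOn f

lemma mrpow_eq_cfc (hA : A.IsHermitian) (t : ℝ) : mrpow A t = cfc (fun x : ℝ => x ^ t) A := by
  rw [hA.cfc_eq, IsHermitian.cfc, Unitary.conjStarAlgAut_apply, mrpow, dif_pos hA]
  rfl

lemma isHermitian_mrpow (hA : A.IsHermitian) (t : ℝ) : (mrpow A t).IsHermitian := by
  rw [mrpow_eq_cfc hA]
  exact cfc_predicate _ A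

lemma mrpow_mul_mrpow (hA : A.PosDef) (s t : ℝ) :
    mrpow A s * mrpow A t = mrpow A (s + t) := by
  simp only [mrpow_eq_cfc hA.1]
  rw [← cfc_mul _ _ _ (A.continuousOn_spectrum _) (A.continuousOn_spectrum _)]
  exact cfc_congr fun x hx => (Real.rpow_add (hA.isStrictlyPositive.spectrum_pos hx) s t).symm

lemma mrpow_zero (hA : A.IsHermitian) : mrpow A 0 = 1 := by
  simp only [mrpow_eq_cfc hA, Real.rpow_zero]
  exact cfc_const_one ℝ A

lemma mrpow_one (hA : A.IsHermitian) : mrpow A 1 = A := by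
  simp only [mrpow_eq_cfc hA, Real.rpow_one, cfc_id' ℝ A]

lemma mrpow_mul_mrpow_neg (hA : A.PosDef) (t : ℝ) : mrpow A t * mrpow A (-t) = 1 := by
  rw [mrpow_mul_mrpow hA, add_neg_cancel, mrpow_zero hA.1]

lemma mrpow_neg_mul_mrpow (hA : A.PosDef) (t : ℝ) : mrpow A (-t) * mrpow A t = 1 := by
  rw [mrpow_mul_mrpow hA, neg_add_cancel, mrpow_zero hA.1]

lemma mrpow_half_mul_mrpow_half (hA : A.PosDef) : mrpow A (1 / 2) * mrpow A (1 / 2) = A := by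
  rw [mrpow_mul_mrpow hA, add_halves, mrpow_one hA.1]

noncomputable def invSqrtConj (A B : Matrix (Fin n) (Fin n) ℂ) : Matrix (Fin n) (Fin n) ℂ :=
  mrpow A (-(1 / 2)) * B * mrpow A (-(1 / 2))

lemma isHermitian_invSqrtConj (hA : A.IsHermitian) (hB : B.IsHermitian) :
    (invSqrtConj A B).IsHermitian :=
  hB.isSelfAdjoint.conjugate_self (isHermitian_mrpow hA _).isSelfAdjoint

lemma isStrictlyPositive_invSqrtConj (hA : A.PosDef) (hB : B.PosDef) :
    IsStrictlyPositive (invSqrtConj A B) :=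
  IsStrictlyPositive.conjugate_of_isUnit_of_isSelfAdjoint B _
    ⟨⟨_, mrpow A (1 / 2), mrpow_neg_mul_mrpow hA _, mrpow_mul_mrpow_neg hA _⟩, rfl⟩
    (isHermitian_mrpow hA.1 _) hB.isStrictlyPositive

lemma invSqrtConj_self (hA : A.PosDef) : invSqrtConj A A = 1 := by
  rw [invSqrtConj]
  nth_rw 2 [← mrpow_one hA.1]
  rw [mrpow_mul_mrpow hA, mrpow_mul_mrpow hA]
  norm_num [mrpow_zero hA.1]

lemma invSqrtConj_smul (c : ℝ) (B : Matrix (Fin n) (Fin n) ℂ) :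
    invSqrtConj A (c • B) = c • invSqrtConj A B := by
  rw [invSqrtConj, invSqrtConj, mul_smul_comm, smul_mul_assoc]

lemma invSqrtConj_mono (hA : A.IsHermitian) (hBC : B ≤ C) : invSqrtConj A B ≤ invSqrtConj A C :=
  (isHermitian_mrpow hA _).isSelfAdjoint.conjugate_le_conjugate hBC

lemma mrpow_half_mul_invSqrtConj_mul (hA : A.PosDef) (B : Matrix (Fin n) (Fin n) ℂ) :
    mrpow A (1 / 2) * invSqrtConj A B * mrpow A (1 / 2) = B := by
  rw [invSqrtConj, ← mul_assoc, ← mul_assoc, mrpow_mul_mrpow_neg hA, one_mul, mul_assoc,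
    mrpow_neg_mul_mrpow hA, mul_one]

lemma le_spectrum_invSqrtConj (hA : A.PosDef) (hB : B.IsHermitian) {a b : ℝ} (ha : 0 < a)
    (hb : 0 ≤ b) (hAa : A ≤ a • 1) (hBb : b • 1 ≤ B) :
    ∀ x ∈ spectrum ℝ (invSqrtConj A B), b / a ≤ x := by
  rw [← algebraMap_le_iff_le_spectrum (isHermitian_invSqrtConj hA.1 hB),
    Algebra.algebraMap_eq_smul_one]
  calc (b / a) • (1 : Matrix (Fin n) (Fin n) ℂ) = (b / a) • invSqrtConj A A := by
        rw [invSqrtConj_self hA]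
    _ ≤ (b / a) • invSqrtConj A (a • 1) := by
        gcongr
        exact invSqrtConj_mono hA.1 hAa
    _ = invSqrtConj A (b • 1) := by
        rw [invSqrtConj_smul, invSqrtConj_smul, smul_smul, div_mul_cancel₀ b ha.ne']
    _ ≤ invSqrtConj A B := invSqrtConj_mono hA.1 hBb

lemma spectrum_invSqrtConj_le (hA : A.PosDef) (hB : B.IsHermitian) {a b : ℝ} (ha : 0 < a)
    (hb : 0 ≤ b) (hAa : a • 1 ≤ A) (hBb : B ≤ b • 1) :
    ∀ x ∈ spectrum ℝ (invSqrtConj A B), x ≤ b / a := by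
  rw [← le_algebraMap_iff_spectrum_le (isHermitian_invSqrtConj hA.1 hB),
    Algebra.algebraMap_eq_smul_one]
  calc invSqrtConj A B ≤ invSqrtConj A (b • 1) := invSqrtConj_mono hA.1 hBb
    _ = (b / a) • invSqrtConj A (a • 1) := by
        rw [invSqrtConj_smul, invSqrtConj_smul, smul_smul, div_mul_cancel₀ b ha.ne']
    _ ≤ (b / a) • invSqrtConj A A := by
        gcongr
        exact invSqrtConj_mono hA.1 hAa
    _ = (b / a) • (1 : Matrix (Fin n) (Fin n) ℂ) := by rw [invSqrtConj_self hA]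

noncomputable def perspective (A B : Matrix (Fin n) (Fin n) ℂ) :
    (ℝ → ℝ) →ₗ[ℝ] Matrix (Fin n) (Fin n) ℂ where
  toFun f := mrpow A (1 / 2) * cfc f (invSqrtConj A B) * mrpow A (1 / 2)
  map_add' f g := by
    rw [Pi.add_def, cfc_add (invSqrtConj A B) f g ((invSqrtConj A B).continuousOn_spectrum f)
      ((invSqrtConj A B).continuousOn_spectrum g), mul_add, add_mul]
  map_smul' c f := by
    rw [Pi.smul_def, cfc_smul _ _ _ ((invSqrtConj A B).continuousOn_spectrum f), mul_smul_comm,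
      smul_mul_assoc, RingHom.id_apply]

lemma perspective_apply (f : ℝ → ℝ) :
    perspective A B f = mrpow A (1 / 2) * cfc f (invSqrtConj A B) * mrpow A (1 / 2) := rfl

lemma perspective_rpow (hA : A.PosDef) (hB : B.IsHermitian) (v : ℝ) :
    perspective A B (fun x => x ^ v) = asharp v A B := by
  rw [perspective_apply, asharp, ← mrpow_eq_cfc (isHermitian_invSqrtConj hA.1 hB)]
  rfl

lemma perspective_one (hA : A.PosDef) (hB : B.IsHermitian) : perspective A B 1 = A := by
  rw [perspective_apply,
    cfc_one ℝ (invSqrtConj A B) (isHermitian_invSqrtConj hA.1 hB).isSelfAdjoint, mul_one, mrpow_half_mul_mrpow_half hA]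

lemma perspective_id (hA : A.PosDef) (hB : B.IsHermitian) : perspective A B id = B := by
  rw [perspective_apply,
    cfc_id ℝ (invSqrtConj A B) (isHermitian_invSqrtConj hA.1 hB).isSelfAdjoint,
    mrpow_half_mul_invSqrtConj_mul hA]

lemma anabla_eq_perspective (hA : A.PosDef) (hB : B.IsHermitian) (v : ℝ) :
    anabla v A B = perspective A B (fun x => (1 - v) + v * x) := by
  have : (fun x : ℝ => (1 - v) + v * x) = (1 - v) • 1 + v • id := by
    funext x; simp
  rw [this, map_add, map_smul, map_smul, perspective_one hA hB, perspective_id hA hB, anabla,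
    Complex.coe_smul, Complex.coe_smul]

lemma heinz_eq_perspective (hA : A.PosDef) (hB : B.IsHermitian) (v : ℝ) :
    heinz v A B = perspective A B (fun x => (x ^ v + x ^ (1 - v)) / 2) := by
  have : (fun x : ℝ => (x ^ v + x ^ (1 - v)) / 2)
      = (1 / 2 : ℝ) • ((fun x => x ^ v) + (fun x => x ^ (1 - v))) := by
    funext x
    simp only [Pi.smul_apply, Pi.add_apply, smul_eq_mul]
    ring
  rw [this, map_smul, map_add, perspective_rpow hA hB, perspective_rpow hA hB, heinz,
    Complex.coe_smul]

lemma perspective_mono (hA : A.IsHermitian) {f g : ℝ → ℝ}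
    (hfg : ∀ x ∈ spectrum ℝ (invSqrtConj A B), f x ≤ g x) :
    perspective A B f ≤ perspective A B g :=
  (isHermitian_mrpow hA _).isSelfAdjoint.conjugate_le_conjugate
    (cfc_mono hfg ((invSqrtConj A B).continuousOn_spectrum f)
      ((invSqrtConj A B).continuousOn_spectrum g))

end

theorem stmt_12_general {n : ℕ} (A B : Matrix (Fin n) (Fin n) ℂ) (m m' M M' v h r r1 rh1 : ℝ)
    (hA : A.PosDef) (hB : B.PosDef)
    (hm : 0 < m) (hM : 0 < M) (hmM : m < M)
    (hcond : (loewner ((m' : ℂ) • 1) A ∧ loewner A ((m : ℂ) • 1) ∧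
        loewner ((M : ℂ) • 1) B ∧ loewner B ((M' : ℂ) • 1)) ∨
      (loewner ((m' : ℂ) • 1) B ∧ loewner B ((m : ℂ) • 1) ∧
        loewner ((M : ℂ) • 1) A ∧ loewner A ((M' : ℂ) • 1)))
    (hh : h = M / m) (hr : r = min v (1 - v))
    (hr1 : r1 = min (2 * r) (1 - 2 * r)) (hrh1 : rh1 = min (2 * r1) (1 - 2 * r1))
    (hv0 : 0 < v) (hv : v < 1) :
    loewner
      (((2 * r : ℝ) : ℂ) • (anabla (1 / 2) A B - asharp (1 / 2) A B)
        + ((r1 : ℝ) : ℂ) • (anabla (1 / 2) A B + asharp (1 / 2) A B - (2 : ℂ) • heinz (1 / 4) A B)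
        + ((Kant (h ^ ((1 : ℝ) / 4)) ^ rh1 : ℝ) : ℂ) • heinz v A B)
      (anabla (1 / 2) A B) := by
  have hspec : ∀ x ∈ spectrum ℝ (invSqrtConj A B), 0 < x ∧ (h ≤ x ∨ x ≤ h⁻¹) := by
    intro x hx
    refine ⟨(isStrictlyPositive_invSqrtConj hA hB).spectrum_pos hx, ?_⟩
    simp only [loewner, ← le_iff, Complex.coe_smul] at hcond
    rcases hcond with ⟨-, hAm, hMB, -⟩ | ⟨-, hBm, hMA, -⟩
    · exact .inl (hh ▸ le_spectrum_invSqrtConj hA hB.1 hm hM.le hAm hMB x hx)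
    · rw [hh, inv_div]
      exact .inr (spectrum_invSqrtConj_le hA hB.1 hM hm.le hMA hBm x hx)
  rw [loewner, ← le_iff, anabla_eq_perspective hA hB.1, ← perspective_rpow hA hB.1,
    heinz_eq_perspective hA hB.1, heinz_eq_perspective hA hB.1]
  simp only [Complex.coe_smul, two_smul, ← map_add, ← map_sub, ← map_smul]
  refine perspective_mono hA.1 fun x hx => ?_
  obtain ⟨hx0, hsep⟩ := hspec x hx
  have := heinz_Kant_scalar (hh ▸ (one_le_div hm).2 hmM.le) hx0 hsep hv0 hv hr hr1 hrh1
  simp only [Pi.add_apply, Pi.sub_apply, Pi.smul_apply, smul_eq_mul]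
  rw [show (1 : ℝ) - 1 / 4 = 3 / 4 by norm_num]
  linarith

theorem stmt_12 {n : ℕ} (A B : Matrix (Fin n) (Fin n) ℂ) (m m' M M' v h r r1 rh1 : ℝ)
    (hA : A.PosDef) (hB : B.PosDef)
    (hm' : 0 < m') (hm : 0 < m) (hM : 0 < M) (hM' : 0 < M') (hmM : m < M)
    (hcond : (loewner ((m' : ℂ) • 1) A ∧ loewner A ((m : ℂ) • 1) ∧
        loewner ((M : ℂ) • 1) B ∧ loewner B ((M' : ℂ) • 1)) ∨
      (loewner ((m' : ℂ) • 1) B ∧ loewner B ((m : ℂ) • 1) ∧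
        loewner ((M : ℂ) • 1) A ∧ loewner A ((M' : ℂ) • 1)))
    (hh : h = M / m) (hr : r = min v (1 - v))
    (hr1 : r1 = min (2 * r) (1 - 2 * r)) (hrh1 : rh1 = min (2 * r1) (1 - 2 * r1))
    (hv0 : 0 < v) (hv : v < 1) :
    loewner
      (((2 * r : ℝ) : ℂ) • (anabla (1 / 2) A B - asharp (1 / 2) A B)
        + ((r1 : ℝ) : ℂ) • (anabla (1 / 2) A B + asharp (1 / 2) A B - (2 : ℂ) • heinz (1 / 4) A B)
        + ((Kant (h ^ ((1 : ℝ) / 4)) ^ rh1 : ℝ) : ℂ) • heinz v A B)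
      (anabla (1 / 2) A B) :=
  stmt_12_general A B m m' M M' v h r r1 rh1 hA hB hm hM hmM hcond hh hr hr1 hrh1 hv0 hv
end
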